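/- (Vinogradov's formula) Let p be a prime and let u be a unit in (ℤ/pℤ)ˣ. Then (φ(p−1)/(p−1)) · Σ_{d | p−1} (μ(d)/φ(d)) · Σ_{χ : orderOf(χ) = d} χ(u) = 1 if the order of u in (ℤ/pℤ)ˣ equals p−1, and equals 0 otherwise, where the inner sum runs over all multiplicative characters χ of (ℤ/pℤ)ˣ into ℂ whose order is exactly d. -/

import Mathlib

/-!
Characters of the cyclic group `G = (ℤ/pℤ)ˣ` of order `N = p - 1` detect `e`-th powers:
`∑_{χ^e = 1} χ(u) = e` if `u^(N/e) = 1` and `0` otherwise. Möbius inversion over the divisors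
`e ∣ N` turns these into the indicator `∑_{e ∣ N/ord u} μ(e)` of `ord u = N`. Grouping the
characters with `χ^e = 1` by their exact order `d ∣ e` gives the weight `∑_{d ∣ e ∣ N} μ(e)/e`
to the characters of order `d`, and this equals `(φ(N)/N) · μ(d)/φ(d)`.
-/

open Finset

namespace ArithmeticFunction

open scoped ArithmeticFunction.Moebius ArithmeticFunction.zeta

theorem IsMultiplicative.sum_divisors_moebius_mul {R : Type*} [CommRing R]
    {f : ArithmeticFunction R} (hf : f.IsMultiplicative) {n : ℕ} (hn : n ≠ 0) :
    ∑ d ∈ n.divisors, (μ d : R) * f d = ∏ p ∈ n.primeFactors, (1 - f p) := by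
  set g := ArithmeticFunction.pmul (μ : ArithmeticFunction R) f * ζ
  have hg : g.IsMultiplicative :=
    (isMultiplicative_moebius.intCast.pmul hf).mul isMultiplicative_zeta.natCast
  have hg_apply (m : ℕ) : g m = ∑ d ∈ m.divisors, (μ d : R) * f d := by
    rw [coe_mul_zeta_apply]
    simp only [pmul_apply, intCoe_apply]
  have hg_prime_pow {p : ℕ} (hp : p.Prime) (k : ℕ) : g (p ^ (k + 1)) = 1 - f p := by
    rw [hg_apply, Nat.sum_divisors_prime_pow hp, sum_range_succ']
    simp_rw [moebius_apply_prime_pow hp (Nat.succ_ne_zero _)]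
    simp [hf.map_one, sub_eq_neg_add]
  rw [← hg_apply, hg.multiplicative_factorization _ hn,
    Nat.prod_factorization_eq_prod_primeFactors]
  refine prod_congr rfl fun p hp => ?_
  have hp' := Nat.prime_of_mem_primeFactors hp
  obtain ⟨k, hk⟩ := Nat.exists_eq_succ_of_ne_zero
    (hp'.factorization_pos_of_dvd hn (Nat.dvd_of_mem_primeFactors hp)).ne'
  rw [hk, hg_prime_pow hp']

theorem sum_divisors_moebius {R : Type*} [Ring R] (n : ℕ) :
    ∑ d ∈ n.divisors, (μ d : R) = if n = 1 then 1 else 0 := by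
  simpa only [coe_mul_zeta_apply, intCoe_apply, one_apply] using
    congrArg (fun f : ArithmeticFunction R => f n) (coe_moebius_mul_coe_zeta (R := R))

theorem moebius_mul_eq_ite (m n : ℕ) :
    μ (m * n) = if m.Coprime n then μ m * μ n else 0 := by
  split_ifs with h
  · exact isMultiplicative_moebius.map_mul_of_coprime h
  · exact moebius_eq_zero_of_not_squarefree fun hsq => h (Nat.squarefree_mul_iff.mp hsq).1

variable (K : Type*) [Field K]

def invOfCoprime (d : ℕ) : ArithmeticFunction K :=
  ⟨fun s => if s.Coprime d then (s : K)⁻¹ else 0, by simp⟩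

theorem invOfCoprime_apply (d s : ℕ) :
    invOfCoprime K d s = if s.Coprime d then (s : K)⁻¹ else 0 := rfl

theorem isMultiplicative_invOfCoprime (d : ℕ) : (invOfCoprime K d).IsMultiplicative := by
  refine ⟨by simp [invOfCoprime_apply], fun {m n} _ => ?_⟩
  simp only [invOfCoprime_apply, Nat.coprime_mul_iff_left, Nat.cast_mul, mul_inv]
  split_ifs <;> simp_all

end ArithmeticFunction

open ArithmeticFunction
open scoped ArithmeticFunction.Moebius

theorem Nat.cast_totient_eq_mul_prod_primeFactors (K : Type*) [Field K] [CharZero K] (n : ℕ) :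
    (n.totient : K) = n * ∏ p ∈ n.primeFactors, (1 - (p : K)⁻¹) := by
  simpa using congrArg (Rat.cast : ℚ → K) (Nat.totient_eq_mul_prod_factors n)

theorem Nat.cast_totient_mul_div {K : Type*} [Field K] [CharZero K] {d M : ℕ} (hd : d ≠ 0)
    (hM : M ≠ 0) :
    ((d * M).totient : K) / (d * M : ℕ) =
      d.totient / d * ∏ p ∈ M.primeFactors \ d.primeFactors, (1 - (p : K)⁻¹) := by
  have hdK : (d : K) ≠ 0 := Nat.cast_ne_zero.mpr hd
  have hMK : (M : K) ≠ 0 := Nat.cast_ne_zero.mpr hM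
  rw [Nat.cast_totient_eq_mul_prod_primeFactors, Nat.cast_totient_eq_mul_prod_primeFactors,
    Nat.primeFactors_mul hd hM, ← union_sdiff_self_eq_union, prod_union disjoint_sdiff]
  push_cast
  field_simp

theorem Nat.divisors_filter_dvd_mul {d M : ℕ} (hd : d ≠ 0) (hM : M ≠ 0) :
    {e ∈ (d * M).divisors | d ∣ e} = M.divisors.map ⟨(d * ·), mul_right_injective₀ hd⟩ := by
  ext e
  simp only [mem_filter, Nat.mem_divisors, mem_map, Function.Embedding.coeFn_mk]
  constructor
  · rintro ⟨⟨he, -⟩, s, rfl⟩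
    exact ⟨s, ⟨(Nat.mul_dvd_mul_iff_left (Nat.pos_of_ne_zero hd)).mp he, hM⟩, rfl⟩
  · rintro ⟨s, ⟨hs, -⟩, rfl⟩
    exact ⟨⟨Nat.mul_dvd_mul_left d hs, mul_ne_zero hd hM⟩, dvd_mul_right d s⟩

theorem Nat.sum_divisors_sum_filter_dvd_comm {M : Type*} [AddCommMonoid M] (N : ℕ)
    (f : ℕ → ℕ → M) :
    ∑ d ∈ N.divisors, ∑ e ∈ N.divisors with d ∣ e, f d e =
      ∑ e ∈ N.divisors, ∑ d ∈ e.divisors, f d e := by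
  refine sum_comm' fun d e => ?_
  simp only [Nat.mem_divisors, mem_filter]
  constructor
  · rintro ⟨-, ⟨heN, hN⟩, hde⟩
    exact ⟨⟨hde, ne_zero_of_dvd_ne_zero hN heN⟩, heN, hN⟩
  · rintro ⟨⟨hde, -⟩, heN, hN⟩
    exact ⟨⟨hde.trans heN, hN⟩, ⟨heN, hN⟩, hde⟩

/-- Writing `e = d * s`, only the `s` coprime to `d` contribute, and their sum is an Euler
product over the primes of `N` not dividing `d`. -/
theorem sum_moebius_div_multiples {K : Type*} [Field K] [CharZero K] {d N : ℕ} (hN : N ≠ 0)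
    (hdN : d ∣ N) :
    ∑ e ∈ N.divisors with d ∣ e, (μ e : K) / e = (N.totient / N) * (μ d / d.totient) := by
  obtain ⟨M, rfl⟩ := hdN
  have hd : d ≠ 0 := left_ne_zero_of_mul hN
  have hM : M ≠ 0 := right_ne_zero_of_mul hN
  have hterm (s : ℕ) :
      (μ (d * s) : K) / (d * s : ℕ) = μ d / d * (μ s * invOfCoprime K d s) := by
    rw [moebius_mul_eq_ite, invOfCoprime_apply]
    by_cases h : s.Coprime d
    · rw [if_pos h.symm, if_pos h]
      push_cast
      ring
    · rw [if_neg (mt Nat.Coprime.symm h), if_neg h]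
      simp
  have hprod : ∏ p ∈ M.primeFactors, (1 - invOfCoprime K d p) =
      ∏ p ∈ M.primeFactors \ d.primeFactors, (1 - (p : K)⁻¹) := by
    rw [sdiff_eq_filter, prod_filter]
    refine prod_congr rfl fun p hp => ?_
    have hp' := Nat.prime_of_mem_primeFactors hp
    by_cases hpd : p ∣ d <;> simp [invOfCoprime_apply, hp'.coprime_iff_not_dvd, hp', hd, hpd]
  have hφd : (d.totient : K) ≠ 0 :=
    Nat.cast_ne_zero.mpr (Nat.totient_pos.mpr (Nat.pos_of_ne_zero hd)).ne'
  rw [Nat.divisors_filter_dvd_mul hd hM, sum_map]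
  simp only [Function.Embedding.coeFn_mk, hterm, ← mul_sum]
  rw [(isMultiplicative_invOfCoprime K d).sum_divisors_moebius_mul hM, hprod,
    Nat.cast_totient_mul_div hd hM]
  field_simp

theorem sum_pow_eq_one_eq_sum_divisors_sum_orderOf_eq {H M : Type*} [Monoid H]
    [Fintype H] [DecidableEq H] [AddCommMonoid M] {e : ℕ} (he : e ≠ 0) (f : H → M) :
    ∑ x with x ^ e = 1, f x = ∑ d ∈ e.divisors, ∑ x with orderOf x = d, f x := by
  have hmaps : ∀ x ∈ ({x | x ^ e = 1} : Finset H), orderOf x ∈ e.divisors := fun x hx =>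
    Nat.mem_divisors.mpr ⟨orderOf_dvd_of_pow_eq_one (mem_filter.mp hx).2, he⟩
  rw [← sum_fiberwise_of_maps_to hmaps]
  refine sum_congr rfl fun d hd => ?_
  rw [filter_filter]
  refine sum_congr (filter_congr fun x _ => ?_) fun _ _ => rfl
  rw [and_iff_right_iff_imp]
  rintro rfl
  exact orderOf_dvd_iff_pow_eq_one.mp (Nat.dvd_of_mem_divisors hd)

theorem card_ker_powMonoidHom {H : Type*} [CommGroup H] [Fintype H] [DecidableEq H] (e : ℕ) :
    Nat.card (powMonoidHom e : H →* H).ker = #{x : H | x ^ e = 1} := by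
  rw [← Fintype.card_subtype, ← Nat.card_eq_fintype_card]
  exact Nat.card_congr (Equiv.subtypeEquivRight fun _ => MonoidHom.mem_ker)

theorem sum_hom_pow_eq_one {H R : Type*} [CommGroup H] [Fintype H] [DecidableEq H] [CommRing R]
    [IsDomain R] (f : H →* R) (e : ℕ) [Decidable (∀ x : H, x ^ e = 1 → f x = 1)] :
    ∑ x with x ^ e = 1, f x =
      if ∀ x : H, x ^ e = 1 → f x = 1 then (#{x : H | x ^ e = 1} : R) else 0 := by
  classical
  set K := (powMonoidHom e : H →* H).ker
  have hK (x : H) : x ∈ K ↔ x ^ e = 1 := MonoidHom.mem_ker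
  have hf : f.comp K.subtype = 1 ↔ ∀ x : H, x ^ e = 1 → f x = 1 := by
    simp [DFunLike.ext_iff, hK]
  calc ∑ x with x ^ e = 1, f x = ∑ x : K, f.comp K.subtype x :=
        sum_subtype _ (by simp [hK]) f
    _ = _ := by
        rw [sum_hom_units, ← Nat.card_eq_fintype_card, card_ker_powMonoidHom]
        simp only [hf]
        split_ifs <;> simp

theorem IsCyclic.card_pow_eq_one_of_dvd {H : Type*} [CommGroup H] [Fintype H] [DecidableEq H]
    [IsCyclic H] {e : ℕ} (he : e ∣ Fintype.card H) : #{x : H | x ^ e = 1} = e := by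
  rw [← card_ker_powMonoidHom, IsCyclic.card_powMonoidHom_ker, Nat.card_eq_fintype_card,
    Nat.gcd_eq_right he]

theorem IsCyclic.ker_powMonoidHom_eq_range {H : Type*} [CommGroup H] [Finite H] [IsCyclic H]
    {e m : ℕ} (h : e * m = Nat.card H) :
    (powMonoidHom e : H →* H).ker = (powMonoidHom m).range := by
  have hm : m ≠ 0 := right_ne_zero_of_mul (h ▸ Nat.card_pos.ne')
  refine (Subgroup.eq_of_le_of_card_ge ?_ ?_).symm
  · rintro _ ⟨x, rfl⟩
    rw [MonoidHom.mem_ker, powMonoidHom_apply, powMonoidHom_apply, ← pow_mul, mul_comm, h,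
      pow_card_eq_one']
  · rw [IsCyclic.card_powMonoidHom_ker, IsCyclic.card_powMonoidHom_range, ← h,
      Nat.gcd_eq_right (dvd_mul_left m e), Nat.gcd_eq_right (dvd_mul_right e m),
      Nat.mul_div_cancel _ (Nat.pos_of_ne_zero hm)]

instance {G M : Type*} [CommGroup G] [Finite G] [IsCyclic G] [CommMonoid M]
    [HasEnoughRootsOfUnity M (Nat.card G)] : IsCyclic (G →* Mˣ) :=
  let e := (IsCyclic.monoidHom_equiv_self G M).some
  isCyclic_of_surjective e.symm e.symm.surjective

section Characters

variable {G : Type*} [CommGroup G] [Finite G] [IsCyclic G]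

theorem pow_card_div_eq_one_iff_forall_character {e : ℕ} (he : e ∣ Nat.card G) (u : G) :
    u ^ (Nat.card G / e) = 1 ↔ ∀ χ : G →* ℂˣ, χ ^ e = 1 → χ u = 1 := by
  have hcard : e * (Nat.card G / e) = Nat.card (G →* ℂˣ) := by
    rw [CommGroup.card_monoidHom_of_hasEnoughRootsOfUnity, Nat.mul_div_cancel' he]
  constructor
  · intro hu χ hχ
    obtain ⟨ψ, rfl⟩ :=
      (IsCyclic.ker_powMonoidHom_eq_range hcard).le (MonoidHom.mem_ker.mpr hχ)
    rw [powMonoidHom_apply, MonoidHom.pow_apply, ← map_pow, hu, map_one]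
  · contrapose!
    intro hu
    obtain ⟨ψ, hψ⟩ := CommGroup.exists_apply_ne_one_of_hasEnoughRootsOfUnity G ℂ hu
    refine ⟨ψ ^ (Nat.card G / e), ?_, by rwa [MonoidHom.pow_apply, ← map_pow]⟩
    exact (pow_mul ψ _ e).symm.trans (mul_comm e _ ▸ hcard ▸ pow_card_eq_one')

theorem sum_character_pow_eq_one_apply [Fintype (G →* ℂˣ)] [DecidableEq (G →* ℂˣ)]
    [DecidableEq G] {e : ℕ} (he : e ∣ Nat.card G) (u : G) :
    ∑ χ : G →* ℂˣ with χ ^ e = 1, (χ u : ℂ) =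
      if u ^ (Nat.card G / e) = 1 then (e : ℂ) else 0 := by
  classical
  have hcard : e ∣ Fintype.card (G →* ℂˣ) := by
    rwa [Fintype.card_eq_nat_card, CommGroup.card_monoidHom_of_hasEnoughRootsOfUnity]
  have := sum_hom_pow_eq_one ((Units.coeHom ℂ).comp (MonoidHom.eval u)) e
  simp only [MonoidHom.coe_comp, Function.comp_apply, MonoidHom.eval_apply_apply,
    Units.coeHom_apply, Units.val_eq_one] at this
  rw [this, IsCyclic.card_pow_eq_one_of_dvd hcard]
  exact if_congr (pow_card_div_eq_one_iff_forall_character he u).symm rfl rfl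

theorem IsCyclic.vinogradov_formula (u : G) :
    ((Nat.card G).totient / Nat.card G : ℂ) *
      ∑ d ∈ (Nat.card G).divisors, (μ d / d.totient : ℂ) *
        ∑ᶠ (χ : G →* ℂˣ) (_ : orderOf χ = d), (χ u : ℂ)
      = if orderOf u = Nat.card G then 1 else 0 := by
  classical
  have := Fintype.ofFinite (G →* ℂˣ)
  set N := Nat.card G
  set S : ℕ → ℂ := fun d => ∑ χ : G →* ℂˣ with orderOf χ = d, (χ u : ℂ)
  have hS (d : ℕ) : ∑ᶠ (χ : G →* ℂˣ) (_ : orderOf χ = d), (χ u : ℂ) = S d :=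
    finsum_cond_eq_sum_of_cond_iff _ (by simp)
  have hN : N ≠ 0 := Nat.card_pos.ne'
  have hu : orderOf u ∣ N := orderOf_dvd_natCard u
  have hpow {e : ℕ} (he : e ∣ N) : u ^ (N / e) = 1 ↔ e ∣ N / orderOf u := by
    rw [← orderOf_dvd_iff_pow_eq_one, Nat.dvd_div_iff_mul_dvd he, Nat.dvd_div_iff_mul_dvd hu,
      mul_comm]
  calc (N.totient / N : ℂ) * ∑ d ∈ N.divisors, (μ d / d.totient : ℂ) *
        ∑ᶠ (χ : G →* ℂˣ) (_ : orderOf χ = d), (χ u : ℂ)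
      = ∑ d ∈ N.divisors, ∑ e ∈ N.divisors with d ∣ e, (μ e / e : ℂ) * S d := by
        simp only [hS, mul_sum]
        refine sum_congr rfl fun d hd => ?_
        rw [← sum_mul, sum_moebius_div_multiples hN (Nat.dvd_of_mem_divisors hd), mul_assoc]
    _ = ∑ e ∈ N.divisors, (μ e / e : ℂ) * ∑ d ∈ e.divisors, S d := by
        simp only [Nat.sum_divisors_sum_filter_dvd_comm, mul_sum]
    _ = ∑ e ∈ N.divisors, if e ∣ N / orderOf u then (μ e : ℂ) else 0 := by
        refine sum_congr rfl fun e he => ?_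
        have he0 : (e : ℂ) ≠ 0 := Nat.cast_ne_zero.mpr (Nat.pos_of_mem_divisors he).ne'
        rw [← sum_pow_eq_one_eq_sum_divisors_sum_orderOf_eq (Nat.pos_of_mem_divisors he).ne',
          sum_character_pow_eq_one_apply (Nat.dvd_of_mem_divisors he),
          if_congr (hpow (Nat.dvd_of_mem_divisors he)) rfl rfl]
        split_ifs
        · exact div_mul_cancel₀ _ he0
        · exact mul_zero _
    _ = if N / orderOf u = 1 then 1 else 0 := by
        rw [← sum_filter, Nat.divisors_filter_dvd_of_dvd hN (Nat.div_dvd_of_dvd hu),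
          sum_divisors_moebius]
    _ = if orderOf u = N then 1 else 0 := by
        refine if_congr ?_ rfl rfl
        rw [Nat.div_eq_iff_eq_mul_left (orderOf_pos u) hu, one_mul, eq_comm]

end Characters

/-- Vinogradov's formula: for a prime `p` and a unit `u` of `ℤ/pℤ`,
`(φ(p−1)/(p−1)) ∑_{d ∣ p−1} (μ(d)/φ(d)) ∑_{ord(χ) = d} χ(u)` equals `1` if `u` has
order `p−1` in `(ℤ/pℤ)ˣ` and `0` otherwise; the inner sum runs over the multiplicative
characters `χ : (ℤ/pℤ)ˣ →* ℂˣ` of order exactly `d`. -/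
theorem vinogradov_characteristic_function (p : ℕ) (hp : p.Prime) (u : (ZMod p)ˣ) :
    ((Nat.totient (p - 1) : ℂ) / ((p : ℂ) - 1)) *
      ∑ d ∈ (p - 1).divisors,
        ((ArithmeticFunction.moebius d : ℂ) / (Nat.totient d : ℂ)) *
          ∑ᶠ (χ : (ZMod p)ˣ →* ℂˣ) (_ : orderOf χ = d), ((χ u : ℂˣ) : ℂ)
    = if orderOf u = p - 1 then 1 else 0 := by
  have : Fact p.Prime := ⟨hp⟩
  have hcard : Nat.card (ZMod p)ˣ = p - 1 := by
    rw [Nat.card_eq_fintype_card, ZMod.card_units]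
  rw [← Nat.cast_pred hp.pos, ← hcard]
  exact IsCyclic.vinogradov_formula u
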